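/- Let T, N, B : I → ℝ³ with pseudo-torsion τ be a Frenet-framed unit speed spacelike curve with lightlike normal in Minkowski 3-space on an open interval I. Then the curve is a slant helix: there exists a constant vector U ≠ 0 in ℝ³ such that the function s ↦ ⟨N(s),U⟩ is constant on I. -/
import Mathlib


open Real

noncomputable def mink (x y : Fin 3 → ℝ) : ℝ := x 0 * y 0 + x 1 * y 1 - x 2 * y 2

lemma mink_smul_left (c : ℝ) (x y : Fin 3 → ℝ) : mink (c • x) y = c * mink x y := by
  simp [mink]; ring

lemma const_of_deriv_zero {E : Type*} [NormedAddCommGroup E] [NormedSpace ℝ E]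
    {I : Set ℝ} (hI : I.OrdConnected) {f : ℝ → E}
    (hf : ∀ s ∈ I, HasDerivAt f 0 s) {a b : ℝ} (ha : a ∈ I) (hb : b ∈ I) :
    f b = f a := by
  have key : ∀ x y : ℝ, x ∈ I → y ∈ I → x ≤ y → f y = f x := by
    intro x y hx hy hxy
    have hsub : Set.Icc x y ⊆ I := hI.out hx hy
    have := constant_of_has_deriv_right_zero
      (f := f) (a := x) (b := y)
      (fun t ht => (hf t (hsub ht)).continuousAt.continuousWithinAt)
      (fun t ht => (hf t (hsub (Set.Ico_subset_Icc_self ht))).hasDerivWithinAt)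
    exact this y (Set.right_mem_Icc.2 hxy)
  rcases le_total a b with h | h
  · exact key a b ha hb h
  · exact (key b a hb ha h).symm

theorem stmt5
    (I : Set ℝ) (hIopen : IsOpen I) (hIconn : I.OrdConnected)
    (T N B : ℝ → Fin 3 → ℝ) (τ : ℝ → ℝ)
    (hTs : ContDiffOn ℝ (⊤ : ℕ∞) T I) (hNs : ContDiffOn ℝ (⊤ : ℕ∞) N I)
    (hBs : ContDiffOn ℝ (⊤ : ℕ∞) B I)
    (hτs : ContDiffOn ℝ (⊤ : ℕ∞) τ I) (hτ0 : ∀ s ∈ I, τ s ≠ 0)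
    (hTT : ∀ s ∈ I, mink (T s) (T s) = 1)
    (hNN : ∀ s ∈ I, mink (N s) (N s) = 0)
    (hBB : ∀ s ∈ I, mink (B s) (B s) = 0)
    (hTN : ∀ s ∈ I, mink (T s) (N s) = 0)
    (hTB : ∀ s ∈ I, mink (T s) (B s) = 0)
    (hNB : ∀ s ∈ I, mink (N s) (B s) = 1)
    (hT' : ∀ s ∈ I, HasDerivAt T (N s) s)
    (hN' : ∀ s ∈ I, HasDerivAt N (τ s • N s) s)
    (hB' : ∀ s ∈ I, HasDerivAt B (-T s + τ s • B s) s)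
 :
    (∃ U : Fin 3 → ℝ, U ≠ 0 ∧ ∃ d : ℝ, ∀ s ∈ I, mink (N s) U = d) := by
  rcases Set.eq_empty_or_nonempty I with hI | ⟨s₀, hs₀⟩
  · refine ⟨fun _ => 1, ?_, 0, fun s hs => by simp [hI] at hs⟩
    intro h
    have := congrFun h 0
    simp at this
  -- antiderivative of τ
  set F : ℝ → ℝ := fun s => ∫ t in s₀..s, τ t with hFdef
  have hτc : ContinuousOn τ I := hτs.continuousOn
  have hF : ∀ s ∈ I, HasDerivAt F (τ s) s := by
    intro s hs
    have hsub : Set.uIcc s₀ s ⊆ I := hIconn.uIcc_subset hs₀ hs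
    have hint : IntervalIntegrable τ MeasureTheory.volume s₀ s :=
      (hτc.mono hsub).intervalIntegrable
    have hmeas : StronglyMeasurableAtFilter τ (nhds s) :=
      hτc.stronglyMeasurableAtFilter hIopen s hs
    exact intervalIntegral.integral_hasDerivAt_right hint hmeas
      ((hτc s hs).continuousAt (hIopen.mem_nhds hs))
  set W : ℝ → Fin 3 → ℝ := fun s => Real.exp (-F s) • N s with hWdef
  have hW' : ∀ s ∈ I, HasDerivAt W 0 s := by
    intro s hs
    have h1 : HasDerivAt (fun s => Real.exp (-F s)) (Real.exp (-F s) * (-τ s)) s :=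
      ((hF s hs).neg).exp
    have h2 := h1.smul (hN' s hs)
    have heq : Real.exp (-F s) • (τ s • N s) + (Real.exp (-F s) * (-τ s)) • N s
        = (0 : Fin 3 → ℝ) := by
      rw [smul_smul, ← add_smul]
      have : Real.exp (-F s) * τ s + Real.exp (-F s) * (-τ s) = 0 := by ring
      rw [this, zero_smul]
    rw [heq] at h2
    exact h2
  have hconst : ∀ s ∈ I, W s = W s₀ := fun s hs =>
    const_of_deriv_zero hIconn hW' hs₀ hs
  refine ⟨N s₀, ?_, 0, ?_⟩
  · intro h
    have := hNB s₀ hs₀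
    rw [h] at this
    simp [mink] at this
  · intro s hs
    have hW : W s = N s₀ := by
      rw [hconst s hs, hWdef]
      simp [hFdef, intervalIntegral.integral_same]
    have : mink (N s) (N s₀) = mink (N s) (W s) := by rw [hW]
    rw [this, hWdef]
    have hsymm : mink (N s) (Real.exp (-F s) • N s) = Real.exp (-F s) * mink (N s) (N s) := by
      simp [mink]; ring
    rw [hsymm, hNN s hs, mul_zero]
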